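/- arXiv:2510.02514 — 2 statements merged into one kernel-verified Lean document; each statement's English description precedes it below -/
import Mathlib

section
/- (Tweedie–Miyasawa formula.) Let p be a probability density on ℝ^d with finite first moment, ∫ ‖x‖ p(x) dx < ∞. Then for every γ > 0 and every y ∈ ℝ^d, q_γ is differentiable at y and ∇ log q_γ(y) = m_γ(y) − y/γ. -/
/-!
Differentiating the Gaussian kernel gives `∇_y g(y - γx) = g(y - γx) (x - y/γ)`, so
`∇q_γ(y) = ∫ p(x) g(y - γx) (x - y/γ) dx = q_γ(y) (m_γ(y) - y/γ)`, and dividing by `q_γ(y) > 0`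
gives the formula for `∇ log q_γ`. Differentiation under the integral sign is justified by
dominated convergence: for `y` in a unit ball the derivative of the integrand is bounded by a
multiple of `(1 + ‖x‖) p(x)`, which is integrable by the first-moment hypothesis.
-/

open MeasureTheory Real

noncomputable def gaussDensity (d : ℕ) (γ : ℝ) (w : EuclideanSpace ℝ (Fin d)) : ℝ :=
  (2 * Real.pi * γ) ^ (-(d : ℝ) / 2) * Real.exp (-‖w‖ ^ 2 / (2 * γ))

noncomputable def smoothedDensity (d : ℕ) (p : EuclideanSpace ℝ (Fin d) → ℝ) (γ : ℝ)
    (y : EuclideanSpace ℝ (Fin d)) : ℝ :=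
  ∫ x, p x * gaussDensity d γ (y - γ • x)

def IsProbDensity (d : ℕ) (p : EuclideanSpace ℝ (Fin d) → ℝ) : Prop :=
  Measurable p ∧ (∀ x, 0 ≤ p x) ∧ ∫ x, p x = 1

/-- Posterior mean `m_γ(y) = E[x | y_γ = y]` of the channel `y_γ = γ x + w`, `w ~ N(0, γI)`. -/
noncomputable def postMean (d : ℕ) (p : EuclideanSpace ℝ (Fin d) → ℝ) (γ : ℝ)
    (y : EuclideanSpace ℝ (Fin d)) : EuclideanSpace ℝ (Fin d) :=
  (smoothedDensity d p γ y)⁻¹ • ∫ x, (p x * gaussDensity d γ (y - γ • x)) • x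

open InnerProductSpace Topology

section Gradient

variable {E : Type*} [NormedAddCommGroup E] [InnerProductSpace ℝ E] [CompleteSpace E]

theorem HasGradientAt.log {f : E → ℝ} {f' x : E} (hf : HasGradientAt f f' x) (hx : f x ≠ 0) :
    HasGradientAt (fun y => Real.log (f y)) ((f x)⁻¹ • f') x := by
  rw [hasGradientAt_iff_hasFDerivAt, map_smul]
  exact hf.hasFDerivAt.log hx

theorem HasGradientAt.const_mul {f : E → ℝ} {f' x : E} (hf : HasGradientAt f f' x) (c : ℝ) :
    HasGradientAt (fun y => c * f y) (c • f') x := by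
  rw [hasGradientAt_iff_hasFDerivAt, map_smul]
  exact hf.hasFDerivAt.const_mul c

theorem hasGradientAt_integral_of_dominated_of_gradient_le {α : Type*} [MeasurableSpace α]
    {μ : Measure α} {F : E → α → ℝ} {G : E → α → E} {x₀ : E} {s : Set E} {bound : α → ℝ}
    (hs : s ∈ 𝓝 x₀) (hF_meas : ∀ᶠ x in 𝓝 x₀, AEStronglyMeasurable (F x) μ)
    (hF_int : Integrable (F x₀) μ) (hG_meas : AEStronglyMeasurable (G x₀) μ)
    (h_bound : ∀ᵐ a ∂μ, ∀ x ∈ s, ‖G x a‖ ≤ bound a) (bound_integrable : Integrable bound μ)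
    (h_diff : ∀ᵐ a ∂μ, ∀ x ∈ s, HasGradientAt (F · a) (G x a) x) :
    HasGradientAt (fun x => ∫ a, F x a ∂μ) (∫ a, G x₀ a ∂μ) x₀ := by
  have h_comm : ∫ a, toDual ℝ E (G x₀ a) ∂μ = toDual ℝ E (∫ a, G x₀ a ∂μ) :=
    (toDual ℝ E).toLinearIsometry.integral_comp_comm (G x₀)
  rw [hasGradientAt_iff_hasFDerivAt, ← h_comm]
  exact hasFDerivAt_integral_of_dominated_of_fderiv_le hs hF_meas hF_int
    ((toDual ℝ E).continuous.comp_aestronglyMeasurable hG_meas) (by simpa using h_bound)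
    bound_integrable h_diff

end Gradient

section Kernel

variable {d : ℕ} {γ : ℝ}

theorem continuous_gaussDensity : Continuous (gaussDensity d γ) := by
  unfold gaussDensity
  fun_prop

theorem gaussDensity_pos (hγ : 0 < γ) (w : EuclideanSpace ℝ (Fin d)) :
    0 < gaussDensity d γ w := by
  unfold gaussDensity
  positivity

theorem gaussDensity_le (hγ : 0 ≤ γ) (w : EuclideanSpace ℝ (Fin d)) :
    gaussDensity d γ w ≤ (2 * π * γ) ^ (-(d : ℝ) / 2) := by
  have h_exp : Real.exp (-‖w‖ ^ 2 / (2 * γ)) ≤ 1 :=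
    Real.exp_le_one_iff.2 (div_nonpos_of_nonpos_of_nonneg (by simp) (by positivity))
  exact mul_le_of_le_one_right (by positivity) h_exp

theorem hasGradientAt_gaussDensity (w : EuclideanSpace ℝ (Fin d)) :
    HasGradientAt (gaussDensity d γ) ((-γ⁻¹ * gaussDensity d γ w) • w) w := by
  rw [hasGradientAt_iff_hasFDerivAt]
  have h := ((((hasFDerivAt_id w).norm_sq.neg).mul_const (2 * γ)⁻¹).exp).const_mul
    ((2 * π * γ) ^ (-(d : ℝ) / 2))
  refine h.congr_fderiv ?_
  ext v
  have h_exponent : -(‖w‖ ^ 2 * (γ⁻¹ * 2⁻¹)) = -‖w‖ ^ 2 / (2 * γ) := by ring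
  simp only [gaussDensity, id_eq, Pi.neg_apply, mul_inv_rev, neg_mul, h_exponent,
    ContinuousLinearMap.comp_id, smul_neg, neg_apply, smul_apply, coe_innerSL_apply, nsmul_eq_mul,
    Nat.cast_ofNat, smul_eq_mul, neg_smul, map_neg, map_smul, toDual_apply_apply, neg_inj]
  ring

theorem hasGradientAt_gaussDensity_sub_smul (hγ : γ ≠ 0) (x z : EuclideanSpace ℝ (Fin d)) :
    HasGradientAt (fun z => gaussDensity d γ (z - γ • x))
      (gaussDensity d γ (z - γ • x) • (x - γ⁻¹ • z)) z := by
  have h := (hasGradientAt_gaussDensity (γ := γ) (z - γ • x)).hasFDerivAt.comp z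
    ((hasFDerivAt_id z).sub_const (γ • x))
  have h_grad : (-γ⁻¹ * gaussDensity d γ (z - γ • x)) • (z - γ • x)
      = gaussDensity d γ (z - γ • x) • (x - γ⁻¹ • z) := by
    rw [smul_sub, smul_sub, smul_smul, smul_smul]
    match_scalars <;> field_simp
  rwa [ContinuousLinearMap.comp_id, ← hasGradientAt_iff_hasFDerivAt, h_grad] at h

end Kernel

section Smoothing

variable {d : ℕ} {p : EuclideanSpace ℝ (Fin d) → ℝ} {γ : ℝ}

theorem integrable_mul_gaussDensity (hp : Integrable p) (hγ : 0 < γ)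
    (y : EuclideanSpace ℝ (Fin d)) :
    Integrable fun x => p x * gaussDensity d γ (y - γ • x) := by
  refine hp.mul_bdd (c := (2 * π * γ) ^ (-(d : ℝ) / 2))
    (continuous_gaussDensity.comp (by fun_prop)).aestronglyMeasurable (ae_of_all _ fun x => ?_)
  rw [Real.norm_of_nonneg (gaussDensity_pos hγ _).le]
  exact gaussDensity_le hγ.le _

theorem integrable_mul_gaussDensity_smul (hp : Integrable p)
    (hmom : Integrable fun x => ‖x‖ * p x) (hγ : 0 < γ) (y : EuclideanSpace ℝ (Fin d)) :
    Integrable fun x => (p x * gaussDensity d γ (y - γ • x)) • x := by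
  refine (hmom.norm.const_mul ((2 * π * γ) ^ (-(d : ℝ) / 2))).mono'
    ((integrable_mul_gaussDensity hp hγ y).aestronglyMeasurable.smul aestronglyMeasurable_id)
    (ae_of_all _ fun x => ?_)
  have hg := gaussDensity_le hγ.le (y - γ • x)
  have hg_nonneg := (gaussDensity_pos hγ (y - γ • x)).le
  rw [norm_smul, norm_mul, norm_mul, norm_norm, Real.norm_of_nonneg hg_nonneg]
  calc ‖p x‖ * gaussDensity d γ (y - γ • x) * ‖x‖
      ≤ ‖p x‖ * (2 * π * γ) ^ (-(d : ℝ) / 2) * ‖x‖ := by gcongr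
    _ = _ := by ring

theorem norm_mul_gaussDensity_smul_sub_le (hγ : 0 < γ) {y z : EuclideanSpace ℝ (Fin d)}
    (hz : z ∈ Metric.ball y 1) (x : EuclideanSpace ℝ (Fin d)) :
    ‖(p x * gaussDensity d γ (z - γ • x)) • (x - γ⁻¹ • z)‖
      ≤ (2 * π * γ) ^ (-(d : ℝ) / 2) * (‖‖x‖ * p x‖ + γ⁻¹ * (‖y‖ + 1) * ‖p x‖) := by
  have hz' : ‖z‖ ≤ ‖y‖ + 1 := by
    have := norm_le_norm_add_norm_sub' z y
    rw [Metric.mem_ball, dist_eq_norm] at hz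
    linarith
  have h_shift : ‖x - γ⁻¹ • z‖ ≤ ‖x‖ + γ⁻¹ * (‖y‖ + 1) := by
    calc ‖x - γ⁻¹ • z‖ ≤ ‖x‖ + ‖γ⁻¹ • z‖ := norm_sub_le _ _
      _ ≤ ‖x‖ + γ⁻¹ * (‖y‖ + 1) := by
        rw [norm_smul, Real.norm_of_nonneg (inv_nonneg.2 hγ.le)]; gcongr
  have hg := gaussDensity_le hγ.le (z - γ • x)
  have hg_nonneg := (gaussDensity_pos hγ (z - γ • x)).le
  rw [norm_smul, norm_mul, norm_mul, norm_norm, Real.norm_of_nonneg hg_nonneg]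
  calc ‖p x‖ * gaussDensity d γ (z - γ • x) * ‖x - γ⁻¹ • z‖
      ≤ ‖p x‖ * (2 * π * γ) ^ (-(d : ℝ) / 2) * (‖x‖ + γ⁻¹ * (‖y‖ + 1)) := by gcongr
    _ = _ := by ring

theorem hasGradientAt_smoothedDensity (hp : Integrable p)
    (hmom : Integrable fun x => ‖x‖ * p x) (hγ : 0 < γ) (y : EuclideanSpace ℝ (Fin d)) :
    HasGradientAt (smoothedDensity d p γ)
      ((∫ x, (p x * gaussDensity d γ (y - γ • x)) • x)
        - (γ⁻¹ * smoothedDensity d p γ y) • y) y := by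
  have h_kernel := hasGradientAt_integral_of_dominated_of_gradient_le
    (G := fun z x => (p x * gaussDensity d γ (z - γ • x)) • (x - γ⁻¹ • z))
    (Metric.ball_mem_nhds y one_pos)
    (.of_forall fun z => (integrable_mul_gaussDensity hp hγ z).aestronglyMeasurable)
    (integrable_mul_gaussDensity hp hγ y)
    ((integrable_mul_gaussDensity hp hγ y).aestronglyMeasurable.smul (by fun_prop))
    (ae_of_all _ fun x z hz => norm_mul_gaussDensity_smul_sub_le hγ hz x)
    ((hmom.norm.add (hp.norm.const_mul (γ⁻¹ * (‖y‖ + 1)))).const_mul _)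
    (ae_of_all _ fun x z _ => by
      simpa only [smul_smul] using
        (hasGradientAt_gaussDensity_sub_smul hγ.ne' x z).const_mul (p x))
  have h_split : ∫ x, (p x * gaussDensity d γ (y - γ • x)) • (x - γ⁻¹ • y)
      = (∫ x, (p x * gaussDensity d γ (y - γ • x)) • x)
        - (γ⁻¹ * smoothedDensity d p γ y) • y := by
    simp_rw [smul_sub, smul_smul]
    rw [integral_sub (integrable_mul_gaussDensity_smul hp hmom hγ y)
      (((integrable_mul_gaussDensity hp hγ y).mul_const γ⁻¹).smul_const y),
      integral_smul_const, integral_mul_const, smoothedDensity, mul_comm]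
  rwa [h_split] at h_kernel

theorem smoothedDensity_pos (hp_nonneg : ∀ x, 0 ≤ p x) (hp_pos : 0 < ∫ x, p x) (hγ : 0 < γ)
    (y : EuclideanSpace ℝ (Fin d)) : 0 < smoothedDensity d p γ y := by
  have hp := Integrable.of_integral_ne_zero hp_pos.ne'
  have h_support : Function.support (fun x => p x * gaussDensity d γ (y - γ • x))
      = Function.support p := by
    ext x
    simp [(gaussDensity_pos hγ (y - γ • x)).ne']
  rw [smoothedDensity, integral_pos_iff_support_of_nonneg
    (fun x => mul_nonneg (hp_nonneg x) (gaussDensity_pos hγ _).le)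
    (integrable_mul_gaussDensity hp hγ y), h_support]
  exact (integral_pos_iff_support_of_nonneg hp_nonneg hp).1 hp_pos

end Smoothing

/-- **Tweedie–Miyasawa formula.** For a probability density with finite first
moment, for every `γ > 0` and every `y`, the smoothed density is differentiable at `y` and
`∇ log q_γ(y) = m_γ(y) − y/γ`. -/
theorem tweedie_miyasawa (d : ℕ) (p : EuclideanSpace ℝ (Fin d) → ℝ)
    (hp : IsProbDensity d p) (hmom : Integrable (fun x => ‖x‖ * p x))
    (γ : ℝ) (hγ : 0 < γ) (y : EuclideanSpace ℝ (Fin d)) :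
    DifferentiableAt ℝ (smoothedDensity d p γ) y ∧
    gradient (fun z => Real.log (smoothedDensity d p γ z)) y
      = postMean d p γ y - γ⁻¹ • y := by
  obtain ⟨-, hp_nonneg, hp_one⟩ := hp
  have hp_pos : 0 < ∫ x, p x := hp_one ▸ one_pos
  have h_grad := hasGradientAt_smoothedDensity (.of_integral_ne_zero hp_pos.ne') hmom hγ y
  have hq_pos := smoothedDensity_pos hp_nonneg hp_pos hγ y
  refine ⟨h_grad.differentiableAt, ?_⟩
  rw [(h_grad.log hq_pos.ne').gradient, postMean, smul_sub, smul_smul,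
    mul_left_comm, inv_mul_cancel₀ hq_pos.ne', mul_one]
end

section
/- (Invariance of the IEM under Euclidean isometries.) Let p be a probability density on ℝ^d, let A be a d×d orthogonal matrix (AᵀA = I), let b ∈ ℝ^d, and set φ(x) = Ax + b. Let p^φ(x) := p(Aᵀ(x − b)) denote the density of φ(X) when X has density p. Then for all x₁, x₂ ∈ ℝ^d and all Γ > 0, IEM_{p^φ}(φ(x₁), φ(x₂), Γ) = IEM_p(x₁, x₂, Γ). -/
open MeasureTheory Real Set Matrix
open scoped ENNReal

noncomputable def scoreFn (d : ℕ) (p : EuclideanSpace ℝ (Fin d) → ℝ) (γ : ℝ)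
    (y : EuclideanSpace ℝ (Fin d)) : EuclideanSpace ℝ (Fin d) :=
  gradient (fun z => Real.log (smoothedDensity d p γ z)) y

noncomputable def IEMsq (d : ℕ) (p : EuclideanSpace ℝ (Fin d) → ℝ) (Γ : ℝ)
    (x₁ x₂ : EuclideanSpace ℝ (Fin d)) : ℝ≥0∞ :=
  ∫⁻ γ in Set.Ioc (0 : ℝ) Γ,
    ∫⁻ w, ENNReal.ofReal
      (‖scoreFn d p γ (γ • x₁ + w) - scoreFn d p γ (γ • x₂ + w)‖ ^ 2 * gaussDensity d γ w)

noncomputable def IEM (d : ℕ) (p : EuclideanSpace ℝ (Fin d) → ℝ) (Γ : ℝ)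
    (x₁ x₂ : EuclideanSpace ℝ (Fin d)) : ℝ :=
  Real.sqrt (IEMsq d p Γ x₁ x₂).toReal

/-- A `d×d` matrix acting on `EuclideanSpace ℝ (Fin d)`. -/
noncomputable def mvE (d : ℕ) (M : Matrix (Fin d) (Fin d) ℝ)
    (v : EuclideanSpace ℝ (Fin d)) : EuclideanSpace ℝ (Fin d) :=
  (EuclideanSpace.equiv (Fin d) ℝ).symm (M.mulVec (EuclideanSpace.equiv (Fin d) ℝ v))

/-
An orthogonal matrix `A` acts on Euclidean space as a linear isometry `e`, and `p^φ = p ∘ φ⁻¹`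
for the affine isometry `φ = e + b`. Since the Gaussian kernel depends only on `‖·‖`, the
smoothed density of `p^φ` at `y` is that of `p` at `e⁻¹ (y - γ b)`, so the score of `p^φ` is
`e` applied to the correspondingly transported score of `p`. In the IEM integrand the translation
cancels, `e` drops out of the norm of the difference, and the leftover rotation of the noise `w`
is absorbed by the rotation invariance of Lebesgue measure and of the Gaussian weight.
-/

namespace Matrix

variable {𝕜 n : Type*} [RCLike 𝕜] [Fintype n] [DecidableEq n]

noncomputable def unitaryLinearIsometryEquiv (A : Matrix n n 𝕜) (hA : A ∈ unitaryGroup n 𝕜) :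
    EuclideanSpace 𝕜 n ≃ₗᵢ[𝕜] EuclideanSpace 𝕜 n :=
  Unitary.linearIsometryEquiv ⟨toEuclideanCLM (n := n) (𝕜 := 𝕜) A, Unitary.map_mem _ hA⟩

lemma unitaryLinearIsometryEquiv_symm_apply (A : Matrix n n 𝕜) (hA : A ∈ unitaryGroup n 𝕜)
    (v : EuclideanSpace 𝕜 n) :
    (unitaryLinearIsometryEquiv A hA).symm v = toEuclideanCLM (n := n) (𝕜 := 𝕜) (star A) v := by
  rw [map_star]
  rfl

end Matrix

section Gradient

variable {E F : Type*} [NormedAddCommGroup E] [InnerProductSpace ℝ E] [CompleteSpace E]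
  [NormedAddCommGroup F] [InnerProductSpace ℝ F] [CompleteSpace F]

lemma gradient_comp_linearIsometryEquiv (e : E ≃ₗᵢ[ℝ] F) (f : F → ℝ) (y : E) :
    gradient (f ∘ e) y = e.symm (gradient f (e y)) := by
  refine ext_inner_right ℝ fun v => ?_
  rw [inner_gradient_left, ← e.inner_map_map, e.apply_symm_apply, inner_gradient_left]
  exact congrArg (· v) (e.toContinuousLinearEquiv.comp_right_fderiv (f := f))

lemma gradient_comp_sub (f : F → ℝ) (c y : F) :
    gradient (fun x => f (x - c)) y = gradient f (y - c) := by
  simp only [gradient, fderiv_comp_sub]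

end Gradient

section AffineIsometry

variable {d : ℕ} (e : EuclideanSpace ℝ (Fin d) ≃ₗᵢ[ℝ] EuclideanSpace ℝ (Fin d))
  (b : EuclideanSpace ℝ (Fin d)) (p : EuclideanSpace ℝ (Fin d) → ℝ) (γ : ℝ)

lemma gaussDensity_linearIsometryEquiv (w : EuclideanSpace ℝ (Fin d)) :
    gaussDensity d γ (e w) = gaussDensity d γ w := by
  simp only [gaussDensity, e.norm_map]

lemma smoothedDensity_comp_affineIsometry (y : EuclideanSpace ℝ (Fin d)) :
    smoothedDensity d (fun x => p (e.symm (x - b))) γ y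
      = smoothedDensity d p γ (e.symm (y - γ • b)) := by
  have hφ : MeasurePreserving (fun u => e u + b) volume volume :=
    (measurePreserving_add_right volume b).comp e.measurePreserving
  have hφ_emb : MeasurableEmbedding (fun u => e u + b) :=
    (e.toHomeomorph.trans (Homeomorph.addRight b)).measurableEmbedding
  rw [smoothedDensity, ← hφ.integral_comp hφ_emb]
  refine integral_congr_ae (Filter.Eventually.of_forall fun u => ?_)
  have hy : y - γ • (e u + b) = e (e.symm (y - γ • b) - γ • u) := by
    rw [map_sub, e.apply_symm_apply, map_smul]
    module
  simp only [add_sub_cancel_right, e.symm_apply_apply, hy, gaussDensity_linearIsometryEquiv]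

lemma scoreFn_comp_affineIsometry (y : EuclideanSpace ℝ (Fin d)) :
    scoreFn d (fun x => p (e.symm (x - b))) γ y
      = e (scoreFn d p γ (e.symm (y - γ • b))) := by
  have h_log : (fun z => Real.log (smoothedDensity d (fun x => p (e.symm (x - b))) γ z))
      = (fun z => Real.log (smoothedDensity d p γ (z - e.symm (γ • b)))) ∘ e.symm := by
    funext z
    rw [smoothedDensity_comp_affineIsometry, Function.comp_apply, map_sub]
  rw [scoreFn, h_log, gradient_comp_linearIsometryEquiv, LinearIsometryEquiv.symm_symm,
    gradient_comp_sub (fun u => Real.log (smoothedDensity d p γ u)), ← map_sub, scoreFn]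

lemma IEMsq_comp_affineIsometry (Γ : ℝ) (x₁ x₂ : EuclideanSpace ℝ (Fin d)) :
    IEMsq d (fun x => p (e.symm (x - b))) Γ (e x₁ + b) (e x₂ + b) = IEMsq d p Γ x₁ x₂ := by
  refine setLIntegral_congr_fun measurableSet_Ioc fun γ _ => ?_
  have h_score (v w : EuclideanSpace ℝ (Fin d)) :
      scoreFn d (fun x => p (e.symm (x - b))) γ (γ • (e v + b) + w)
        = e (scoreFn d p γ (γ • v + e.symm w)) := by
    have h_arg : γ • (e v + b) + w - γ • b = e (γ • v + e.symm w) := by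
      rw [map_add, map_smul, e.apply_symm_apply]
      module
    rw [scoreFn_comp_affineIsometry, h_arg, e.symm_apply_apply]
  set g := fun w => ENNReal.ofReal
    (‖scoreFn d p γ (γ • x₁ + w) - scoreFn d p γ (γ • x₂ + w)‖ ^ 2 * gaussDensity d γ w)
  calc _ = ∫⁻ w, g (e.symm w) := by
          refine lintegral_congr fun w => ?_
          simp only [g, h_score, ← map_sub, e.norm_map, gaussDensity_linearIsometryEquiv e.symm]
    _ = ∫⁻ w, g w :=
          e.symm.measurePreserving.lintegral_comp_emb e.symm.toHomeomorph.measurableEmbedding g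

end AffineIsometry

theorem IEM_isometry_invariant_general (d : ℕ) (p : EuclideanSpace ℝ (Fin d) → ℝ)
    (A : Matrix (Fin d) (Fin d) ℝ) (hA : Aᵀ * A = 1) (b : EuclideanSpace ℝ (Fin d)) :
    ∀ (x₁ x₂ : EuclideanSpace ℝ (Fin d)) (Γ : ℝ), 0 < Γ →
      IEM d (fun x => p (mvE d Aᵀ (x - b))) Γ
          (mvE d A x₁ + b) (mvE d A x₂ + b)
        = IEM d p Γ x₁ x₂ := by
  intro x₁ x₂ Γ _
  have hA_star : star A = Aᵀ := conjTranspose_eq_transpose_of_trivial A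
  let e := A.unitaryLinearIsometryEquiv (mem_unitaryGroup_iff'.mpr (hA_star ▸ hA))
  have he (v : EuclideanSpace ℝ (Fin d)) : mvE d A v = e v := rfl
  have he_symm (v : EuclideanSpace ℝ (Fin d)) : mvE d Aᵀ v = e.symm v := by
    rw [unitaryLinearIsometryEquiv_symm_apply, hA_star]
    rfl
  simp only [IEM, he, he_symm, IEMsq_comp_affineIsometry]

/-- **invariance of the IEM under Euclidean isometries.**
Let `φ(x) = Ax + b` with `A` orthogonal, and let `p^φ(x) = p(Aᵀ(x − b))` be the density of
`φ(X)` when `X ~ p`. Then `IEM_{p^φ}(φ(x₁), φ(x₂), Γ) = IEM_p(x₁, x₂, Γ)`. -/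
theorem IEM_isometry_invariant (d : ℕ) (p : EuclideanSpace ℝ (Fin d) → ℝ)
    (hp : IsProbDensity d p)
    (A : Matrix (Fin d) (Fin d) ℝ) (hA : Aᵀ * A = 1) (b : EuclideanSpace ℝ (Fin d)) :
    ∀ (x₁ x₂ : EuclideanSpace ℝ (Fin d)) (Γ : ℝ), 0 < Γ →
      IEM d (fun x => p (mvE d Aᵀ (x - b))) Γ
          (mvE d A x₁ + b) (mvE d A x₂ + b)
        = IEM d p Γ x₁ x₂ :=
  IEM_isometry_invariant_general d p A hA b
end
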